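/- In the ring $R_\Theta := \mathbb{Z}[X_1,X_2]/(X_1^2X_2 + X_1X_2^2,\; X_1^2 + X_2^2 + X_1X_2)$, the joint annihilator $\{r \in R_\Theta : X_1 r = 0 \text{ and } X_2 r = 0\}$ is a free $\mathbb{Z}$-submodule of rank 1, generated by the residue class of $X_1^2X_2$. -/

import Mathlib

/-! The functional "coefficient of `X₁²X₂` minus coefficient of `X₁X₂²`" vanishes on the
ideal (both generators `f, g` are homogeneous, and the degree-3 part of `u·f + v·g` has
equal coefficients at these two monomials), so it descends to a trace `τ : R_Θ → ℤ` with
`τ(x₁²x₂) = 1`. The relations reduce every monomial, so `R_Θ` is spanned over `ℤ` by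
`1, x₁, x₂, x₁², x₁x₂, x₁²x₂`. If `x₁r = x₂r = 0`, then `τ(mr) = 0` for every monomial `m ≠ 1`;
pairing with `x₁, x₂, x₁², x₁x₂, x₁²x₂` kills the coefficients of `r` one by one, except the
one of `x₁²x₂`. Applying `τ` to `n • x₁²x₂ = 0` gives `n = 0`. -/

open MvPolynomial

noncomputable section

/-- The defining ideal of the graph ring of the planar theta graph. -/
abbrev thetaIdeal : Ideal (MvPolynomial (Fin 2) ℤ) :=
  Ideal.span {X 0 ^ 2 * X 1 + X 0 * X 1 ^ 2, X 0 ^ 2 + X 1 ^ 2 + X 0 * X 1}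

/-- The graph ring `R_Θ = ℤ[X₁,X₂]/(X₁²X₂ + X₁X₂², X₁² + X₂² + X₁X₂)` of the
planar theta graph. -/
abbrev RTheta := MvPolynomial (Fin 2) ℤ ⧸ thetaIdeal

/-- The residue class of `X₁` in `R_Θ`. -/
abbrev RTheta.x1 : RTheta := Ideal.Quotient.mk thetaIdeal (X 0)

/-- The residue class of `X₂` in `R_Θ`. -/
abbrev RTheta.x2 : RTheta := Ideal.Quotient.mk thetaIdeal (X 1)

lemma pow_mul_pow_mul_eq_zero {R : Type*} [CommRing R] {x y r : R} (hx : x * r = 0)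
    (hy : y * r = 0) {i j : ℕ} (hij : 0 < i + j) : x ^ i * y ^ j * r = 0 := by
  rcases i with _ | i
  · rcases j with _ | j
    · simp at hij
    · linear_combination y ^ j * hy
  · linear_combination x ^ i * y ^ j * hx

def expVec (a b : ℕ) : Fin 2 →₀ ℕ := Finsupp.single 0 a + Finsupp.single 1 b

@[simp] lemma expVec_apply_zero (a b : ℕ) : expVec a b 0 = a := by simp [expVec]

@[simp] lemma expVec_apply_one (a b : ℕ) : expVec a b 1 = b := by simp [expVec]

lemma expVec_le_expVec {a b c d : ℕ} : expVec a b ≤ expVec c d ↔ a ≤ c ∧ b ≤ d := by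
  simp [Finsupp.le_def, Fin.forall_fin_two]

lemma expVec_tsub (a b c d : ℕ) : expVec a b - expVec c d = expVec (a - c) (b - d) := by
  ext i; fin_cases i <;> simp

lemma expVec_inj {a b c d : ℕ} : expVec a b = expVec c d ↔ a = c ∧ b = d := by
  simp [Finsupp.ext_iff, Fin.forall_fin_two]

lemma X_pow_mul_X_pow {R : Type*} [CommSemiring R] (a b : ℕ) :
    (X 0 ^ a * X 1 ^ b : MvPolynomial (Fin 2) R) = monomial (expVec a b) 1 := by
  rw [X_pow_eq_monomial, X_pow_eq_monomial, monomial_mul, one_mul, expVec]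

def thetaTrace : MvPolynomial (Fin 2) ℤ →ₗ[ℤ] ℤ :=
  lcoeff ℤ (expVec 2 1) - lcoeff ℤ (expVec 1 2)

lemma thetaTrace_X_pow_mul_X_pow (a b : ℕ) :
    thetaTrace (X 0 ^ a * X 1 ^ b) =
      if a = 2 ∧ b = 1 then 1 else if a = 1 ∧ b = 2 then -1 else 0 := by
  simp only [thetaTrace, X_pow_mul_X_pow, LinearMap.sub_apply, lcoeff_apply, coeff_monomial,
    expVec_inj]
  split_ifs <;> omega

lemma thetaTrace_mul_X_pow_mul_X_pow (u : MvPolynomial (Fin 2) ℤ) (a b : ℕ) :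
    thetaTrace (u * X 0 ^ a * X 1 ^ b) =
      (if a ≤ 2 ∧ b ≤ 1 then coeff (expVec (2 - a) (1 - b)) u else 0) -
        (if a ≤ 1 ∧ b ≤ 2 then coeff (expVec (1 - a) (2 - b)) u else 0) := by
  simp only [thetaTrace, mul_assoc, X_pow_mul_X_pow, LinearMap.sub_apply, lcoeff_apply,
    coeff_mul_monomial', expVec_le_expVec, expVec_tsub, mul_one]

lemma thetaTrace_eq_zero_of_mem {p : MvPolynomial (Fin 2) ℤ} (hp : p ∈ thetaIdeal) :
    thetaTrace p = 0 := by
  obtain ⟨u, v, rfl⟩ := Ideal.mem_span_pair.mp hp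
  rw [show u * (X 0 ^ 2 * X 1 + X 0 * X 1 ^ 2) + v * (X 0 ^ 2 + X 1 ^ 2 + X 0 * X 1) =
      u * X 0 ^ 2 * X 1 ^ 1 + u * X 0 ^ 1 * X 1 ^ 2 +
        (v * X 0 ^ 2 * X 1 ^ 0 + v * X 0 ^ 0 * X 1 ^ 2 + v * X 0 ^ 1 * X 1 ^ 1) by ring]
  simp only [map_add, thetaTrace_mul_X_pow_mul_X_pow]
  norm_num
  ring

namespace RTheta

open Ideal.Quotient

def trace : RTheta →ₗ[ℤ] ℤ :=
  (thetaIdeal.restrictScalars ℤ).liftQ thetaTrace (fun _ => thetaTrace_eq_zero_of_mem) ∘ₗ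
    (Submodule.Quotient.restrictScalarsEquiv ℤ thetaIdeal).symm.toLinearMap

lemma trace_mk (p : MvPolynomial (Fin 2) ℤ) : trace (mk thetaIdeal p) = thetaTrace p := rfl

lemma trace_intCast_mul (n : ℤ) (r : RTheta) : trace (n * r) = n * trace r := by
  rw [← zsmul_eq_mul, map_zsmul, smul_eq_mul]

lemma trace_x1_pow_mul_x2_pow (a b : ℕ) :
    trace (x1 ^ a * x2 ^ b) = if a = 2 ∧ b = 1 then 1 else if a = 1 ∧ b = 2 then -1 else 0 := by
  rw [← thetaTrace_X_pow_mul_X_pow, ← trace_mk, map_mul (mk thetaIdeal), map_pow (mk thetaIdeal),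
    map_pow (mk thetaIdeal)]

lemma trace_x1_sq_mul_x2 : trace (x1 ^ 2 * x2) = 1 := by
  simpa using trace_x1_pow_mul_x2_pow 2 1

lemma cubic_relation : x1 ^ 2 * x2 + x1 * x2 ^ 2 = 0 := by
  simpa using eq_zero_iff_mem.mpr (Ideal.subset_span (by simp) :
    (X 0 ^ 2 * X 1 + X 0 * X 1 ^ 2 : MvPolynomial (Fin 2) ℤ) ∈ thetaIdeal)

lemma quadratic_relation : x1 ^ 2 + x2 ^ 2 + x1 * x2 = 0 := by
  simpa using eq_zero_iff_mem.mpr (Ideal.subset_span (by simp) :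
    (X 0 ^ 2 + X 1 ^ 2 + X 0 * X 1 : MvPolynomial (Fin 2) ℤ) ∈ thetaIdeal)

lemma x1_pow_three : x1 ^ 3 = 0 := by
  linear_combination x1 * quadratic_relation - cubic_relation

lemma x1_sq_mul_x2_sq : x1 ^ 2 * x2 ^ 2 = 0 := by
  linear_combination (x1 + x2) * cubic_relation - x1 * x2 * quadratic_relation

lemma exists_eq_linear_combination (r : RTheta) : ∃ a b c d e f : ℤ,
    r = a + b * x1 + c * x2 + d * x1 ^ 2 + e * (x1 * x2) + f * (x1 ^ 2 * x2) := by
  obtain ⟨p, rfl⟩ := mk_surjective r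
  induction p using MvPolynomial.induction_on with
  | C n => exact ⟨n, 0, 0, 0, 0, 0, by rw [eq_intCast C n, map_intCast]; simp⟩
  | add p q hp hq =>
    obtain ⟨a, b, c, d, e, f, hp⟩ := hp
    obtain ⟨a', b', c', d', e', f', hq⟩ := hq
    refine ⟨a + a', b + b', c + c', d + d', e + e', f + f', ?_⟩
    rw [map_add, hp, hq]
    push_cast
    ring
  | mul_X p i hp =>
    obtain ⟨a, b, c, d, e, f, hp⟩ := hp
    rw [map_mul, hp]
    match i with
    | 0 =>
      refine ⟨0, a, 0, b, c, e, ?_⟩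
      linear_combination (d + f * x2) * x1_pow_three
    | 1 =>
      refine ⟨0, 0, a, -c, b - c, d - e, ?_⟩
      push_cast
      linear_combination c * quadratic_relation + e * cubic_relation + f * x1_sq_mul_x2_sq

lemma trace_monomial_mul_linear_combination (i j : ℕ) (a b c d e f : ℤ) :
    trace (x1 ^ i * x2 ^ j *
        (a + b * x1 + c * x2 + d * x1 ^ 2 + e * (x1 * x2) + f * (x1 ^ 2 * x2))) =
      a * trace (x1 ^ i * x2 ^ j) + b * trace (x1 ^ (i + 1) * x2 ^ j) +
        c * trace (x1 ^ i * x2 ^ (j + 1)) + d * trace (x1 ^ (i + 2) * x2 ^ j) +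
        e * trace (x1 ^ (i + 1) * x2 ^ (j + 1)) + f * trace (x1 ^ (i + 2) * x2 ^ (j + 1)) := by
  rw [show x1 ^ i * x2 ^ j *
        (a + b * x1 + c * x2 + d * x1 ^ 2 + e * (x1 * x2) + f * (x1 ^ 2 * x2)) =
      a * (x1 ^ i * x2 ^ j) + b * (x1 ^ (i + 1) * x2 ^ j) + c * (x1 ^ i * x2 ^ (j + 1)) +
        d * (x1 ^ (i + 2) * x2 ^ j) + e * (x1 ^ (i + 1) * x2 ^ (j + 1)) +
        f * (x1 ^ (i + 2) * x2 ^ (j + 1)) by ring]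
  simp only [map_add, trace_intCast_mul]

end RTheta

theorem RTheta_joint_annihilator :
    (LinearMap.ker (LinearMap.mulLeft ℤ RTheta.x1) ⊓
        LinearMap.ker (LinearMap.mulLeft ℤ RTheta.x2)
      = Submodule.span ℤ {Ideal.Quotient.mk thetaIdeal (X 0 ^ 2 * X 1)}) ∧
    ∀ n : ℤ, n • Ideal.Quotient.mk thetaIdeal (X 0 ^ 2 * X 1) = 0 → n = 0 := by
  have hsocle : Ideal.Quotient.mk thetaIdeal (X 0 ^ 2 * X 1) = RTheta.x1 ^ 2 * RTheta.x2 := by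
    simp
  simp only [hsocle, SetLike.ext_iff, Submodule.mem_inf, LinearMap.mem_ker,
    LinearMap.mulLeft_apply, Submodule.mem_span_singleton]
  refine ⟨fun r => ⟨fun ⟨hr₁, hr₂⟩ => ?_, ?_⟩, fun n hn => ?_⟩
  · obtain ⟨a, b, c, d, e, f, rfl⟩ := RTheta.exists_eq_linear_combination r
    have pairing (i j : ℕ) (hij : 0 < i + j) :=
      congrArg RTheta.trace (pow_mul_pow_mul_eq_zero hr₁ hr₂ hij)
    have h10 := pairing 1 0 one_pos
    have h01 := pairing 0 1 one_pos
    have h20 := pairing 2 0 two_pos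
    have h11 := pairing 1 1 two_pos
    have h21 := pairing 2 1 three_pos
    simp only [RTheta.trace_monomial_mul_linear_combination, RTheta.trace_x1_pow_mul_x2_pow,
      map_zero] at h10 h01 h20 h11 h21
    norm_num at h10 h01 h20 h11 h21
    obtain ⟨rfl, rfl, rfl, rfl, rfl⟩ : a = 0 ∧ b = 0 ∧ c = 0 ∧ d = 0 ∧ e = 0 := by omega
    exact ⟨f, by simp [zsmul_eq_mul]⟩
  · rintro ⟨n, rfl⟩
    exact ⟨by linear_combination (n : RTheta) * RTheta.x2 * RTheta.x1_pow_three,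
      by linear_combination (n : RTheta) * RTheta.x1_sq_mul_x2_sq⟩
  · simpa [RTheta.trace_intCast_mul, RTheta.trace_x1_sq_mul_x2] using congrArg RTheta.trace hn

end
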